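/- Fix n : ℕ and let ω = exp(πi/4) ∈ ℂ. Let G_n be the subgroup of invertible linear operators on ℂ^{(Fin n → ZMod 2)} generated by the scalar operator ω • 1 together with: T_i (i : Fin n) with T_i e_x = ω^{(x i).val} • e_x; X_i with X_i e_x = e_{Function.update x i (x i + 1)}; and CNOT_{i,j} (i ≠ j) with CNOT_{i,j} e_x = e_{Function.update x j (x i + x j)}. If W ∈ G_n is diagonal in the computational basis, then there exists a phase normal form p (i.e., p x = a₀ + ∑_i (a i)·⟨x i⟩ + ∑_{i<j} ⟨b i j⟩·⟨x i + x j⟩ + ∑_{i<j<k} ⟨c i j k⟩·⟨x i + x j + x k⟩ for some data a₀ : ZMod 8, a : Fin n → ZMod 8, b on pairs i<j valued in ZMod 4, c on triples i<j<k valued in ZMod 2) such that W e_x = ω^{(p x).val} • e_x for every x : Fin n → ZMod 2. -/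
import Mathlib


open scoped BigOperators

noncomputable section

/-- The `n`-qubit state space `ℂ^(Fin n → ZMod 2)`. -/
abbrev QState (n : ℕ) := (Fin n → ZMod 2) → ℂ

/-- The standard basis vector `e x`. -/
def e {n : ℕ} (x : Fin n → ZMod 2) : QState n := Pi.single x 1

/-- `ω = exp (π i / 4)`. -/
def ω : ℂ := Complex.exp (Real.pi * Complex.I / 4)

/-- The generators of the group of `n`-qubit CNOT-dihedral operators: the scalar `ω • 1`,
the `T` gates, the `X` gates, and the `CNOT` gates, each specified by its action on the
standard basis vectors. -/
def dihedralGens (n : ℕ) : Set (LinearMap.GeneralLinearGroup ℂ (QState n)) :=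
  {W | ∀ x, W.val (e x) = ω • e x} ∪
  {W | ∃ i : Fin n, ∀ x, W.val (e x) = ω ^ (x i).val • e x} ∪
  {W | ∃ i : Fin n, ∀ x, W.val (e x) = e (Function.update x i (x i + 1))} ∪
  {W | ∃ i j : Fin n, i ≠ j ∧ ∀ x, W.val (e x) = e (Function.update x j (x i + x j))}

/-- The group `G_n` of `n`-qubit CNOT-dihedral operators. -/
def dihedralGroup' (n : ℕ) : Subgroup (LinearMap.GeneralLinearGroup ℂ (QState n)) :=
  Subgroup.closure (dihedralGens n)

/-- The type of pairs `i < j` in `Fin n`. -/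
abbrev Pair (n : ℕ) := {p : Fin n × Fin n // p.1 < p.2}

/-- The type of triples `i < j < k` in `Fin n`. -/
abbrev Triple (n : ℕ) := {t : Fin n × Fin n × Fin n // t.1 < t.2.1 ∧ t.2.1 < t.2.2}

/-- The phase normal form with data `(a₀, a, b, c)`, as a function
`(Fin n → ZMod 2) → ZMod 8`. Here `⟨·⟩` is realized by casting `.val` into `ZMod 8`. -/
def pnf {n : ℕ} (a₀ : ZMod 8) (a : Fin n → ZMod 8) (b : Pair n → ZMod 4)
    (c : Triple n → ZMod 2) (x : Fin n → ZMod 2) : ZMod 8 :=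
  a₀ + ∑ i : Fin n, a i * ((x i).val : ZMod 8)
    + ∑ p : Pair n, ((b p).val : ZMod 8) * ((x p.val.1 + x p.val.2).val : ZMod 8)
    + ∑ t : Triple n,
        ((c t).val : ZMod 8) * ((x t.val.1 + x t.val.2.1 + x t.val.2.2).val : ZMod 8)


section CDihAux

lemma hω8 : ω ^ 8 = 1 := by
  rw [ω, ← Complex.exp_nat_mul]
  rw [show ((8:ℕ) : ℂ) * (↑Real.pi * Complex.I / 4) = 2 * ↑Real.pi * Complex.I by push_cast; ring]
  exact Complex.exp_two_pi_mul_I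

lemma ω_ne : ω ≠ 0 := Complex.exp_ne_zero _

lemma ω_pow_mod (k : ℕ) : ω ^ (k % 8) = ω ^ k := by
  conv_rhs => rw [← Nat.div_add_mod k 8]
  rw [pow_add, pow_mul, hω8, one_pow, one_mul]

lemma ω_val_add (z w : ZMod 8) : ω ^ (z + w).val = ω ^ z.val * ω ^ w.val := by
  rw [ZMod.val_add, ω_pow_mod, pow_add]

lemma ω_val_neg (z : ZMod 8) : ω ^ (-z).val * ω ^ z.val = 1 := by
  rw [← ω_val_add, neg_add_cancel]
  rfl
variable {n : ℕ}
abbrev V (n : ℕ) := Fin n → ZMod 2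

def D (u : V n) (f : V n → ZMod 8) : V n → ZMod 8 := fun x => f (x + u) - f x

lemma Dcomm (u v : V n) (f : V n → ZMod 8) : D u (D v f) = D v (D u f) := by
  funext x
  simp only [D, add_right_comm]
  ring

structure Cls (f : V n → ZMod 8) : Prop where
  h2 : ∀ u v x, (2 : ZMod 8) ∣ D u (D v f) x
  h3 : ∀ u v w x, (4 : ZMod 8) ∣ D u (D v (D w f)) x
  h4 : ∀ u v w t x, D u (D v (D w (D t f))) x = 0

lemma Cls.diff {f : V n → ZMod 8} (hf : Cls f) (u : V n) : Cls (D u f) := by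
  constructor
  · intro a b x
    rw [show D a (D b (D u f)) = D u (D a (D b f)) by rw [Dcomm b u, Dcomm a u]]
    exact dvd_sub (hf.h2 a b (x + u)) (hf.h2 a b x)
  · intro a b c x
    rw [show D a (D b (D c (D u f))) = D u (D a (D b (D c f))) by rw [Dcomm c u, Dcomm b u, Dcomm a u]]
    exact dvd_sub (hf.h3 a b c (x + u)) (hf.h3 a b c x)
  · intro a b c d x
    rw [show D a (D b (D c (D d (D u f)))) = D u (D a (D b (D c (D d f)))) by
      rw [Dcomm d u, Dcomm c u, Dcomm b u, Dcomm a u]]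
    show D a (D b (D c (D d f))) (x + u) - D a (D b (D c (D d f))) x = 0
    rw [hf.h4 a b c d (x + u), hf.h4 a b c d x, sub_zero]

lemma Cls.add {f g : V n → ZMod 8} (hf : Cls f) (hg : Cls g) : Cls (fun x => f x + g x) := by
  have hD : ∀ (u : V n) (f g : V n → ZMod 8), D u (fun x => f x + g x) = fun x => D u f x + D u g x := by
    intro u f g; funext x; simp only [D]; ring
  constructor
  · intro u v x; rw [hD, hD]; exact dvd_add (hf.h2 u v x) (hg.h2 u v x)
  · intro u v w x; rw [hD, hD, hD]; exact dvd_add (hf.h3 u v w x) (hg.h3 u v w x)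
  · intro u v w t x; rw [hD, hD, hD, hD]
    simp [hf.h4 u v w t x, hg.h4 u v w t x]

lemma Cls.neg {f : V n → ZMod 8} (hf : Cls f) : Cls (fun x => -(f x)) := by
  have hD : ∀ (u : V n) (f : V n → ZMod 8), D u (fun x => -(f x)) = fun x => -(D u f x) := by
    intro u f; funext x; simp only [D]; ring
  constructor
  · intro u v x; rw [hD, hD]; exact (hf.h2 u v x).neg_right
  · intro u v w x; rw [hD, hD, hD]; exact (hf.h3 u v w x).neg_right
  · intro u v w t x; rw [hD, hD, hD, hD]; simp [hf.h4 u v w t x]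

lemma Cls.comp {f : V n → ZMod 8} (hf : Cls f) (g L : V n → V n)
    (hg : ∀ x u, g (x + u) = g x + L u) : Cls (fun x => f (g x)) := by
  have hD : ∀ (u : V n) (f : V n → ZMod 8), D u (fun x => f (g x)) = fun x => D (L u) f (g x) := by
    intro u f; funext x; simp only [D, hg]
  constructor
  · intro u v x; rw [hD, hD]; exact hf.h2 _ _ _
  · intro u v w x; rw [hD, hD, hD]; exact hf.h3 _ _ _ _
  · intro u v w t x; rw [hD, hD, hD, hD]; exact hf.h4 _ _ _ _ _

lemma Cls.const (c : ZMod 8) : Cls (fun _ : V n => c) := by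
  have : ∀ u : V n, D u (fun _ => c) = fun _ => 0 := by
    intro u; funext x; simp [D]
  constructor <;> intro u v <;> simp [this, D]

lemma Cls.coord (i : Fin n) : Cls (fun x : V n => ((x i).val : ZMod 8)) := by
  constructor
  · intro u v x
    simp only [D, Pi.add_apply]
    obtain ⟨k, hk⟩ := (by decide : ∀ a b c : ZMod 2, ∃ k : ZMod 8,
      (((a+b+c).val : ZMod 8) - ((a+b).val : ZMod 8)) - (((a+c).val : ZMod 8) - ((a).val : ZMod 8)) = 2 * k)
      (x i) (u i) (v i)
    exact ⟨k, hk⟩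
  · intro u v w x
    simp only [D, Pi.add_apply]
    obtain ⟨k, hk⟩ := (by decide : ∀ a b c d : ZMod 2, ∃ k : ZMod 8,
      ((((a+b+c+d).val : ZMod 8) - ((a+b+c).val : ZMod 8)) - (((a+b+d).val : ZMod 8) - ((a+b).val : ZMod 8)))
      - ((((a+c+d).val : ZMod 8) - ((a+c).val : ZMod 8)) - (((a+d).val : ZMod 8) - ((a).val : ZMod 8))) = 4 * k)
      (x i) (u i) (v i) (w i)
    exact ⟨k, hk⟩
  · intro u v w t x
    simp only [D, Pi.add_apply]
    exact (by decide : ∀ a b c d f : ZMod 2,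
      (((((a+b+c+d+f).val : ZMod 8) - ((a+b+c+d).val : ZMod 8)) - (((a+b+c+f).val : ZMod 8) - ((a+b+c).val : ZMod 8)))
      - ((((a+b+d+f).val : ZMod 8) - ((a+b+d).val : ZMod 8)) - (((a+b+f).val : ZMod 8) - ((a+b).val : ZMod 8))))
      - (((((a+c+d+f).val : ZMod 8) - ((a+c+d).val : ZMod 8)) - (((a+c+f).val : ZMod 8) - ((a+c).val : ZMod 8)))
      - ((((a+d+f).val : ZMod 8) - ((a+d).val : ZMod 8)) - (((a+f).val : ZMod 8) - ((a).val : ZMod 8)))) = 0)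
      (x i) (u i) (v i) (w i) (t i)

-- characteristic vector
def χ (S : Finset (Fin n)) : V n := fun i => if i ∈ S then 1 else 0
def δ (i : Fin n) : V n := χ {i}

def ΔL (l : List (Fin n)) (f : V n → ZMod 8) : V n → ZMod 8 :=
  l.foldr (fun i g => D (δ i) g) f

lemma ΔL_perm {l₁ l₂ : List (Fin n)} (h : l₁.Perm l₂) (f : V n → ZMod 8) :
    ΔL l₁ f = ΔL l₂ f := by
  induction h with
  | nil => rfl
  | cons a _ ih => simp only [ΔL, List.foldr_cons] at *; rw [ih]
  | swap a b l => simp only [ΔL, List.foldr_cons]; exact Dcomm _ _ _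
  | trans _ _ ih1 ih2 => rw [ih1, ih2]

def ΔF (S : Finset (Fin n)) (f : V n → ZMod 8) : V n → ZMod 8 := ΔL S.toList f

lemma ΔF_insert {i : Fin n} {S : Finset (Fin n)} (h : i ∉ S) (f : V n → ZMod 8) :
    ΔF (insert i S) f = D (δ i) (ΔF S f) :=
  ΔL_perm (Finset.toList_insert h) f

lemma ΔF_empty (f : V n → ZMod 8) : ΔF ∅ f = f := by
  simp [ΔF, ΔL]

lemma Cls.ΔL {f : V n → ZMod 8} (hf : Cls f) (l : List (Fin n)) : Cls (ΔL l f) := by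
  induction l with
  | nil => exact hf
  | cons a l ih => exact ih.diff _

lemma χ_insert {i : Fin n} {S : Finset (Fin n)} (h : i ∉ S) : χ (insert i S) = χ S + δ i := by
  funext j
  simp only [χ, δ, Pi.add_apply, Finset.mem_insert, Finset.mem_singleton]
  by_cases hj : j = i
  · subst hj
    simp [h]
  · simp [hj]

lemma factA (f : V n → ZMod 8) (S : Finset (Fin n)) (x : V n) :
    f (x + χ S) = ∑ T ∈ S.powerset, ΔF T f x := by
  induction S using Finset.induction_on generalizing x with
  | empty =>
    rw [Finset.powerset_empty, Finset.sum_singleton, ΔF_empty]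
    congr 1
    funext j
    simp [χ]
  | @insert i S hi ih =>
    rw [χ_insert hi, show x + (χ S + δ i) = (x + δ i) + χ S by ring, ih (x + δ i),
      Finset.sum_powerset_insert hi]
    have : ∀ T ∈ S.powerset, ΔF T f (x + δ i) = ΔF T f x + ΔF (insert i T) f x := by
      intro T hT
      rw [ΔF_insert (fun hc => hi ((Finset.mem_powerset.mp hT) hc)) f]
      show ΔF T f (x + δ i) = ΔF T f x + (ΔF T f (x + δ i) - ΔF T f x)
      ring
    rw [Finset.sum_congr rfl this, Finset.sum_add_distrib]


-- helper injectivity lemmas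
lemma pair_inj {a b c d : Fin n} (hab : a < b) (hcd : c < d)
    (h : ({a, b} : Finset (Fin n)) = {c, d}) : a = c ∧ b = d := by
  have ha : a = c ∨ a = d := by
    have : a ∈ ({c, d} : Finset (Fin n)) := h ▸ (by simp)
    simpa using this
  have hb : b = c ∨ b = d := by
    have : b ∈ ({c, d} : Finset (Fin n)) := h ▸ (by simp)
    simpa using this
  have hd : d = a ∨ d = b := by
    have : d ∈ ({a, b} : Finset (Fin n)) := by rw [h]; simp
    simpa using this
  rcases ha with h' | h' <;> rcases hb with h'' | h'' <;> rcases hd with h3 | h3 <;>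
    (simp only [Fin.lt_def, Fin.ext_iff] at *) <;> omega

lemma triple_inj {a b c d f g : Fin n} (h1 : a < b) (h2 : b < c) (h1' : d < f) (h2' : f < g)
    (h : ({a, b, c} : Finset (Fin n)) = {d, f, g}) : a = d ∧ b = f ∧ c = g := by
  have ha : a = d ∨ a = f ∨ a = g := by
    have : a ∈ ({d, f, g} : Finset (Fin n)) := h ▸ (by simp)
    simpa using this
  have hb : b = d ∨ b = f ∨ b = g := by
    have : b ∈ ({d, f, g} : Finset (Fin n)) := h ▸ (by simp)
    simpa using this
  have hcc : c = d ∨ c = f ∨ c = g := by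
    have : c ∈ ({d, f, g} : Finset (Fin n)) := h ▸ (by simp)
    simpa using this
  have hd : d = a ∨ d = b ∨ d = c := by
    have : d ∈ ({a, b, c} : Finset (Fin n)) := by rw [h]; simp
    simpa using this
  rcases ha with h4 | h4 | h4 <;> rcases hb with h5 | h5 | h5 <;>
    rcases hcc with h6 | h6 | h6 <;> rcases hd with h7 | h7 | h7 <;>
    (simp only [Fin.lt_def, Fin.ext_iff] at *) <;> omega

lemma sum_finset_decomp (F : Finset (Fin n) → ZMod 8) (hF : ∀ T, 4 ≤ T.card → F T = 0) :
    ∑ T : Finset (Fin n), F T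
      = F ∅ + (∑ i : Fin n, F {i}) + (∑ p : Pair n, F {p.val.1, p.val.2})
        + (∑ t : Triple n, F {t.val.1, t.val.2.1, t.val.2.2}) := by
  have hsplit : ∀ T : Finset (Fin n), F T
      = (if T.card = 0 then F T else 0) + (if T.card = 1 then F T else 0)
        + (if T.card = 2 then F T else 0) + (if T.card = 3 then F T else 0) := by
    intro T
    by_cases h0 : T.card = 0
    · simp [h0]
    · by_cases h1 : T.card = 1
      · simp [h1]
      · by_cases h2 : T.card = 2
        · simp [h2]
        · by_cases h3 : T.card = 3
          · simp [h0, h1, h2, h3]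
          · simp [h0, h1, h2, h3, hF T (by omega)]
  rw [Finset.sum_congr rfl (fun T _ => hsplit T), Finset.sum_add_distrib,
    Finset.sum_add_distrib, Finset.sum_add_distrib]
  congr 1
  · congr 1
    · congr 1
      · -- card = 0 bucket
        rw [← Finset.sum_filter]
        have : Finset.univ.filter (fun T : Finset (Fin n) => T.card = 0) = {∅} := by
          ext T
          simp [Finset.card_eq_zero]
        rw [this, Finset.sum_singleton]
      · -- card = 1 bucket
        rw [← Finset.sum_filter]
        refine (Finset.sum_bij (fun (i : Fin n) _ => ({i} : Finset (Fin n))) ?_ ?_ ?_ ?_).symm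
        · intro i _
          simp
        · intro i _ j _ h
          exact Finset.singleton_injective h
        · intro T hT
          simp only [Finset.mem_filter, Finset.card_eq_one] at hT
          obtain ⟨a, rfl⟩ := hT.2
          exact ⟨a, Finset.mem_univ a, rfl⟩
        · intro i _
          rfl
    · -- card = 2 bucket
      rw [← Finset.sum_filter]
      refine (Finset.sum_bij (fun (p : Pair n) _ => ({p.val.1, p.val.2} : Finset (Fin n))) ?_ ?_ ?_ ?_).symm
      · intro p _
        simp [Finset.card_pair (ne_of_lt p.prop)]
      · intro p _ q _ h
        obtain ⟨h1, h2⟩ := pair_inj p.prop q.prop h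
        exact Subtype.ext (Prod.ext h1 h2)
      · intro T hT
        simp only [Finset.mem_filter, Finset.card_eq_two] at hT
        obtain ⟨u, v, huv, rfl⟩ := hT.2
        rcases huv.lt_or_gt with h | h
        · exact ⟨⟨(u, v), h⟩, Finset.mem_univ _, rfl⟩
        · exact ⟨⟨(v, u), h⟩, Finset.mem_univ _, Finset.pair_comm v u⟩
      · intro p _
        rfl
  · -- card = 3 bucket
    rw [← Finset.sum_filter]
    refine (Finset.sum_bij
      (fun (t : Triple n) _ => ({t.val.1, t.val.2.1, t.val.2.2} : Finset (Fin n))) ?_ ?_ ?_ ?_).symm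
    · intro t _
      have h12 : t.val.1 ≠ t.val.2.1 := ne_of_lt t.prop.1
      have h13 : t.val.1 ≠ t.val.2.2 := ne_of_lt (t.prop.1.trans t.prop.2)
      have h23 : t.val.2.1 ≠ t.val.2.2 := ne_of_lt t.prop.2
      simp only [Finset.mem_filter, Finset.mem_univ, true_and]
      rw [Finset.card_insert_of_notMem (by simp [h12, h13]), Finset.card_pair h23]
    · intro t _ s _ h
      obtain ⟨e1, e2, e3⟩ := triple_inj t.prop.1 t.prop.2 s.prop.1 s.prop.2 h
      exact Subtype.ext (Prod.ext e1 (Prod.ext e2 e3))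
    · intro T hT
      simp only [Finset.mem_filter, Finset.card_eq_three] at hT
      obtain ⟨u, v, w, huv, huw, hvw, rfl⟩ := hT.2
      rcases lt_trichotomy u v with h1 | h1 | h1
      · rcases lt_trichotomy v w with h2 | h2 | h2
        · exact ⟨⟨(u, v, w), h1, h2⟩, Finset.mem_univ _, rfl⟩
        · exact absurd h2 hvw
        · rcases lt_trichotomy u w with h3 | h3 | h3
          · exact ⟨⟨(u, w, v), h3, h2⟩, Finset.mem_univ _, by ext z; simp; tauto⟩
          · exact absurd h3 huw
          · exact ⟨⟨(w, u, v), h3, h1⟩, Finset.mem_univ _, by ext z; simp; tauto⟩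
      · exact absurd h1 huv
      · rcases lt_trichotomy u w with h2 | h2 | h2
        · exact ⟨⟨(v, u, w), h1, h2⟩, Finset.mem_univ _, by ext z; simp; tauto⟩
        · exact absurd h2 huw
        · rcases lt_trichotomy v w with h3 | h3 | h3
          · exact ⟨⟨(v, w, u), h3, h2⟩, Finset.mem_univ _, by ext z; simp; tauto⟩
          · exact absurd h3 hvw
          · exact ⟨⟨(w, v, u), h3, h1⟩, Finset.mem_univ _, by ext z; simp; tauto⟩
    · intro t _
      rfl
-- === identities and data definitions ===
def B2 (μ : ZMod 8) : ZMod 4 := -(((μ.val / 2 : ℕ) : ZMod 4))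
def A2 (μ : ZMod 8) : ZMod 8 := -(((B2 μ).val : ZMod 8))
def C3v (μ : ZMod 8) : ZMod 2 := ((μ.val / 4 : ℕ) : ZMod 2)
def B3 (μ : ZMod 8) : ZMod 4 := 3 * ((μ.val / 4 : ℕ) : ZMod 4)
def A3 (μ : ZMod 8) : ZMod 8 := ((μ.val / 4 : ℕ) : ZMod 8)
def κ (z : ZMod 8) : ZMod 8 := ((z.val / 4 : ℕ) : ZMod 8)
def c4 (z : ZMod 8) : ZMod 4 := ((z.val : ℕ) : ZMod 4)

lemma I2 : ∀ k : ZMod 8, ∀ u v : ZMod 2,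
    (2*k) * (u.val : ZMod 8) * (v.val : ZMod 8)
      = A2 (2*k) * ((u.val : ZMod 8) + (v.val : ZMod 8))
        + ((B2 (2*k)).val : ZMod 8) * (((u+v).val : ℕ) : ZMod 8) := by decide

lemma I3 : ∀ k : ZMod 8, ∀ u v w : ZMod 2,
    (4*k) * (u.val : ZMod 8) * (v.val : ZMod 8) * (w.val : ZMod 8)
      = A3 (4*k) * ((u.val : ZMod 8) + (v.val : ZMod 8) + (w.val : ZMod 8))
        + ((B3 (4*k)).val : ZMod 8) * ((((u+v).val : ℕ) : ZMod 8) + (((u+w).val : ℕ) : ZMod 8) + (((v+w).val : ℕ) : ZMod 8))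
        + ((C3v (4*k)).val : ZMod 8) * (((u+v+w).val : ℕ) : ZMod 8) := by decide

lemma Lκ : ∀ z : ZMod 8, ((c4 z).val : ZMod 8) = z - 4 * κ z := by decide

lemma L4P : ∀ u v : ZMod 2, (4 : ZMod 8) * (((u+v).val : ℕ) : ZMod 8)
    = 4 * ((u.val : ZMod 8) + (v.val : ZMod 8)) := by decide

variable {n : ℕ}

def yv (x : V n) (i : Fin n) : ZMod 8 := ((x i).val : ZMod 8)
def Pv (x : V n) (p : Pair n) : ZMod 8 := (((x p.val.1 + x p.val.2).val : ℕ) : ZMod 8)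
def Qv (x : V n) (t : Triple n) : ZMod 8 := (((x t.val.1 + x t.val.2.1 + x t.val.2.2).val : ℕ) : ZMod 8)

def pr1 (t : Triple n) : Pair n := ⟨(t.val.1, t.val.2.1), t.prop.1⟩
def pr2 (t : Triple n) : Pair n := ⟨(t.val.1, t.val.2.2), t.prop.1.trans t.prop.2⟩
def pr3 (t : Triple n) : Pair n := ⟨(t.val.2.1, t.val.2.2), t.prop.2⟩

def ind2 (p : Pair n) (i : Fin n) : ZMod 8 :=
  (if p.val.1 = i then 1 else 0) + (if p.val.2 = i then 1 else 0)
def ind3 (t : Triple n) (i : Fin n) : ZMod 8 :=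
  (if t.val.1 = i then 1 else 0) + (if t.val.2.1 = i then 1 else 0) + (if t.val.2.2 = i then 1 else 0)
def ind23 (t : Triple n) (p : Pair n) : ZMod 8 :=
  (if pr1 t = p then 1 else 0) + (if pr2 t = p then 1 else 0) + (if pr3 t = p then 1 else 0)

variable (m : Finset (Fin n) → ZMod 8)

def m2 (p : Pair n) : ZMod 8 := m {p.val.1, p.val.2}
def m3 (t : Triple n) : ZMod 8 := m {t.val.1, t.val.2.1, t.val.2.2}
def Γm (p : Pair n) : ZMod 8 :=
  ((B2 (m2 m p)).val : ZMod 8) + ∑ t : Triple n, ((B3 (m3 m t)).val : ZMod 8) * ind23 t p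
def aDat (i : Fin n) : ZMod 8 :=
  m {i} + (∑ p : Pair n, (A2 (m2 m p) + 4 * κ (Γm m p)) * ind2 p i)
    + (∑ t : Triple n, A3 (m3 m t) * ind3 t i)
def bDat (p : Pair n) : ZMod 4 := c4 (Γm m p)
def cDat (t : Triple n) : ZMod 2 := C3v (m3 m t)

set_option maxHeartbeats 1000000 in
lemma pnf_eq_sum (hd2 : ∀ T : Finset (Fin n), T.card = 2 → (2:ZMod 8) ∣ m T)
    (hd3 : ∀ T : Finset (Fin n), T.card = 3 → (4:ZMod 8) ∣ m T) (x : V n) :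
    pnf (m ∅) (aDat m) (bDat m) (cDat m) x
      = m ∅ + (∑ i : Fin n, m {i} * yv x i)
        + (∑ p : Pair n, m2 m p * (yv x p.val.1 * yv x p.val.2))
        + (∑ t : Triple n, m3 m t * (yv x t.val.1 * yv x t.val.2.1 * yv x t.val.2.2)) := by
  have inner2 : ∀ (C : ZMod 8) (p : Pair n),
      (∑ i : Fin n, C * ind2 p i * yv x i) = C * (yv x p.val.1 + yv x p.val.2) := by
    intro C p
    have h : ∀ i : Fin n, C * ind2 p i * yv x i
        = (if p.val.1 = i then C * yv x i else 0) + (if p.val.2 = i then C * yv x i else 0) := by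
      intro i
      rw [ind2]
      by_cases e1 : p.val.1 = i <;> by_cases e2 : p.val.2 = i <;> simp [e1, e2] <;> ring
    rw [Finset.sum_congr rfl fun i _ => h i, Finset.sum_add_distrib,
      Finset.sum_ite_eq, Finset.sum_ite_eq]
    simp [mul_add]
  have inner3 : ∀ (C : ZMod 8) (t : Triple n),
      (∑ i : Fin n, C * ind3 t i * yv x i)
        = C * (yv x t.val.1 + yv x t.val.2.1 + yv x t.val.2.2) := by
    intro C t
    have h : ∀ i : Fin n, C * ind3 t i * yv x i
        = (if t.val.1 = i then C * yv x i else 0) + (if t.val.2.1 = i then C * yv x i else 0)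
          + (if t.val.2.2 = i then C * yv x i else 0) := by
      intro i
      rw [ind3]
      by_cases e1 : t.val.1 = i <;> by_cases e2 : t.val.2.1 = i <;> by_cases e3 : t.val.2.2 = i <;>
        simp [e1, e2, e3] <;> ring
    rw [Finset.sum_congr rfl fun i _ => h i, Finset.sum_add_distrib, Finset.sum_add_distrib,
      Finset.sum_ite_eq, Finset.sum_ite_eq, Finset.sum_ite_eq]
    simp [mul_add]
  have innerP : ∀ (C : ZMod 8) (t : Triple n),
      (∑ p : Pair n, C * ind23 t p * Pv x p)
        = C * (Pv x (pr1 t) + Pv x (pr2 t) + Pv x (pr3 t)) := by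
    intro C t
    have h : ∀ p : Pair n, C * ind23 t p * Pv x p
        = (if pr1 t = p then C * Pv x p else 0) + (if pr2 t = p then C * Pv x p else 0)
          + (if pr3 t = p then C * Pv x p else 0) := by
      intro p
      rw [ind23]
      by_cases e1 : pr1 t = p <;> by_cases e2 : pr2 t = p <;> by_cases e3 : pr3 t = p <;>
        simp [e1, e2, e3] <;> ring
    rw [Finset.sum_congr rfl fun p _ => h p, Finset.sum_add_distrib, Finset.sum_add_distrib,
      Finset.sum_ite_eq, Finset.sum_ite_eq, Finset.sum_ite_eq]
    simp [mul_add]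
  have hsum_a : (∑ i : Fin n, aDat m i * yv x i)
      = (∑ i : Fin n, m {i} * yv x i)
        + (∑ p : Pair n, (A2 (m2 m p) + 4 * κ (Γm m p)) * (yv x p.val.1 + yv x p.val.2))
        + (∑ t : Triple n, A3 (m3 m t) * (yv x t.val.1 + yv x t.val.2.1 + yv x t.val.2.2)) := by
    have expand : ∀ i : Fin n, aDat m i * yv x i = m {i} * yv x i
        + (∑ p : Pair n, (A2 (m2 m p) + 4 * κ (Γm m p)) * ind2 p i * yv x i)
        + (∑ t : Triple n, A3 (m3 m t) * ind3 t i * yv x i) := by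
      intro i
      rw [aDat, add_mul, add_mul, Finset.sum_mul, Finset.sum_mul]
    rw [Finset.sum_congr rfl fun i _ => expand i, Finset.sum_add_distrib, Finset.sum_add_distrib]
    congr 1
    · congr 1
      rw [Finset.sum_comm]
      exact Finset.sum_congr rfl fun p _ => inner2 _ p
    · rw [Finset.sum_comm]
      exact Finset.sum_congr rfl fun t _ => inner3 _ t
  have hsum_b : (∑ p : Pair n, ((bDat m p).val : ZMod 8) * Pv x p)
      = (∑ p : Pair n, Γm m p * Pv x p)
        - (∑ p : Pair n, (4 * κ (Γm m p)) * (yv x p.val.1 + yv x p.val.2)) := by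
    rw [← Finset.sum_sub_distrib]
    refine Finset.sum_congr rfl fun p _ => ?_
    rw [bDat, Lκ (Γm m p)]
    have h4P : (4:ZMod 8) * Pv x p = 4 * (yv x p.val.1 + yv x p.val.2) :=
      L4P (x p.val.1) (x p.val.2)
    calc (Γm m p - 4 * κ (Γm m p)) * Pv x p
        = Γm m p * Pv x p - κ (Γm m p) * (4 * Pv x p) := by ring
      _ = Γm m p * Pv x p - (4 * κ (Γm m p)) * (yv x p.val.1 + yv x p.val.2) := by
          rw [h4P]; ring
  have hsum_Γ : (∑ p : Pair n, Γm m p * Pv x p)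
      = (∑ p : Pair n, ((B2 (m2 m p)).val : ZMod 8) * Pv x p)
        + ∑ t : Triple n, ((B3 (m3 m t)).val : ZMod 8)
            * (Pv x (pr1 t) + Pv x (pr2 t) + Pv x (pr3 t)) := by
    have expand : ∀ p : Pair n, Γm m p * Pv x p
        = ((B2 (m2 m p)).val : ZMod 8) * Pv x p
          + (∑ t : Triple n, ((B3 (m3 m t)).val : ZMod 8) * ind23 t p * Pv x p) := by
      intro p
      rw [Γm, add_mul, Finset.sum_mul]
    rw [Finset.sum_congr rfl fun p _ => expand p, Finset.sum_add_distrib]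
    congr 1
    rw [Finset.sum_comm]
    exact Finset.sum_congr rfl fun t _ => innerP _ t
  have hS2 : (∑ p : Pair n, (A2 (m2 m p) + 4 * κ (Γm m p)) * (yv x p.val.1 + yv x p.val.2))
      = (∑ p : Pair n, A2 (m2 m p) * (yv x p.val.1 + yv x p.val.2))
        + (∑ p : Pair n, (4 * κ (Γm m p)) * (yv x p.val.1 + yv x p.val.2)) := by
    rw [← Finset.sum_add_distrib]
    exact Finset.sum_congr rfl fun p _ => by ring
  have e2 : (∑ p : Pair n, A2 (m2 m p) * (yv x p.val.1 + yv x p.val.2))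
      + (∑ p : Pair n, ((B2 (m2 m p)).val : ZMod 8) * Pv x p)
      = ∑ p : Pair n, m2 m p * (yv x p.val.1 * yv x p.val.2) := by
    rw [← Finset.sum_add_distrib]
    refine Finset.sum_congr rfl fun p _ => ?_
    obtain ⟨k, hk⟩ := hd2 {p.val.1, p.val.2} (Finset.card_pair (ne_of_lt p.prop))
    have hk' : m2 m p = 2 * k := hk
    rw [hk']
    have := (I2 k (x p.val.1) (x p.val.2)).symm
    calc A2 (2*k) * (yv x p.val.1 + yv x p.val.2) + ((B2 (2*k)).val : ZMod 8) * Pv x p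
        = A2 (2*k) * (((x p.val.1).val : ZMod 8) + ((x p.val.2).val : ZMod 8))
          + ((B2 (2*k)).val : ZMod 8) * (((x p.val.1 + x p.val.2).val : ℕ) : ZMod 8) := rfl
      _ = (2*k) * ((x p.val.1).val : ZMod 8) * ((x p.val.2).val : ZMod 8) := this
      _ = (2*k) * (yv x p.val.1 * yv x p.val.2) := by simp only [yv]; ring
  have e3 : (∑ t : Triple n, A3 (m3 m t) * (yv x t.val.1 + yv x t.val.2.1 + yv x t.val.2.2))
      + (∑ t : Triple n, ((B3 (m3 m t)).val : ZMod 8)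
          * (Pv x (pr1 t) + Pv x (pr2 t) + Pv x (pr3 t)))
      + (∑ t : Triple n, ((cDat m t).val : ZMod 8) * Qv x t)
      = ∑ t : Triple n, m3 m t * (yv x t.val.1 * yv x t.val.2.1 * yv x t.val.2.2) := by
    rw [← Finset.sum_add_distrib, ← Finset.sum_add_distrib]
    refine Finset.sum_congr rfl fun t _ => ?_
    have h12 : t.val.1 ≠ t.val.2.1 := ne_of_lt t.prop.1
    have h13 : t.val.1 ≠ t.val.2.2 := ne_of_lt (t.prop.1.trans t.prop.2)
    have h23 : t.val.2.1 ≠ t.val.2.2 := ne_of_lt t.prop.2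
    have hcard : ({t.val.1, t.val.2.1, t.val.2.2} : Finset (Fin n)).card = 3 := by
      rw [Finset.card_insert_of_notMem (by simp [h12, h13]), Finset.card_pair h23]
    obtain ⟨k, hk⟩ := hd3 {t.val.1, t.val.2.1, t.val.2.2} hcard
    have hk' : m3 m t = 4 * k := hk
    rw [cDat, hk']
    have := (I3 k (x t.val.1) (x t.val.2.1) (x t.val.2.2)).symm
    calc A3 (4*k) * (yv x t.val.1 + yv x t.val.2.1 + yv x t.val.2.2)
          + ((B3 (4*k)).val : ZMod 8) * (Pv x (pr1 t) + Pv x (pr2 t) + Pv x (pr3 t))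
          + ((C3v (4*k)).val : ZMod 8) * Qv x t
        = A3 (4*k) * (((x t.val.1).val : ZMod 8) + ((x t.val.2.1).val : ZMod 8) + ((x t.val.2.2).val : ZMod 8))
          + ((B3 (4*k)).val : ZMod 8)
            * ((((x t.val.1 + x t.val.2.1).val : ℕ) : ZMod 8) + (((x t.val.1 + x t.val.2.2).val : ℕ) : ZMod 8)
              + (((x t.val.2.1 + x t.val.2.2).val : ℕ) : ZMod 8))
          + ((C3v (4*k)).val : ZMod 8) * (((x t.val.1 + x t.val.2.1 + x t.val.2.2).val : ℕ) : ZMod 8) := rfl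
      _ = (4*k) * ((x t.val.1).val : ZMod 8) * ((x t.val.2.1).val : ZMod 8) * ((x t.val.2.2).val : ZMod 8) := this
      _ = (4*k) * (yv x t.val.1 * yv x t.val.2.1 * yv x t.val.2.2) := by
          simp only [yv]; ring
  have hpnf : pnf (m ∅) (aDat m) (bDat m) (cDat m) x
      = m ∅ + (∑ i : Fin n, aDat m i * yv x i)
        + (∑ p : Pair n, ((bDat m p).val : ZMod 8) * Pv x p)
        + (∑ t : Triple n, ((cDat m t).val : ZMod 8) * Qv x t) := rfl
  rw [hpnf, hsum_a, hsum_b, hS2, hsum_Γ, ← e2, ← e3]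
  ring

def suppF (x : V n) : Finset (Fin n) := Finset.univ.filter (fun i => x i = 1)

lemma chi_supp (x : V n) : χ (suppF x) = x := by
  funext i
  simp only [χ, suppF, Finset.mem_filter, Finset.mem_univ, true_and]
  rcases (by decide : ∀ z : ZMod 2, z = 0 ∨ z = 1) (x i) with h | h <;> simp [h]

def indF (T : Finset (Fin n)) (x : V n) : ZMod 8 := ∏ i ∈ T, yv x i

lemma ΔL_big {f : V n → ZMod 8} (hf : Cls f) :
    ∀ (l : List (Fin n)), 4 ≤ l.length → ∀ x, ΔL l f x = 0 := by
  intro l hl x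
  match l, hl with
  | a :: b :: c :: d :: r, _ =>
    exact (hf.ΔL r).h4 (δ a) (δ b) (δ c) (δ d) x

theorem repr_of_Cls {f : V n → ZMod 8} (hf : Cls f) :
    ∃ (a₀ : ZMod 8) (a : Fin n → ZMod 8) (b : Pair n → ZMod 4) (c : Triple n → ZMod 2),
      ∀ x : V n, f x = pnf a₀ a b c x := by
  classical
  set m : Finset (Fin n) → ZMod 8 := fun T => ΔF T f 0 with hmdef
  have hm2 : ∀ T : Finset (Fin n), T.card = 2 → (2:ZMod 8) ∣ m T := by
    intro T hT
    have hl : T.toList.length = 2 := by rw [Finset.length_toList]; exact hT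
    obtain ⟨a, b, hab⟩ := List.length_eq_two.mp hl
    show (2:ZMod 8) ∣ ΔL T.toList f 0
    rw [hab]
    exact hf.h2 (δ a) (δ b) 0
  have hm3 : ∀ T : Finset (Fin n), T.card = 3 → (4:ZMod 8) ∣ m T := by
    intro T hT
    have hl : T.toList.length = 3 := by rw [Finset.length_toList]; exact hT
    obtain ⟨a, b, c, habc⟩ := List.length_eq_three.mp hl
    show (4:ZMod 8) ∣ ΔL T.toList f 0
    rw [habc]
    exact hf.h3 (δ a) (δ b) (δ c) 0
  have hm4 : ∀ T : Finset (Fin n), 4 ≤ T.card → m T = 0 := by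
    intro T hT
    show ΔL T.toList f 0 = 0
    exact ΔL_big hf T.toList (by rw [Finset.length_toList]; exact hT) 0
  refine ⟨m ∅, aDat m, bDat m, cDat m, fun x => ?_⟩
  have step1 : f x = ∑ T ∈ (suppF x).powerset, m T := by
    have hx : f x = f (0 + χ (suppF x)) := by rw [zero_add, chi_supp]
    rw [hx, factA f (suppF x) 0]
  have step2 : ∑ T ∈ (suppF x).powerset, m T
      = ∑ T ∈ (suppF x).powerset, m T * indF T x := by
    refine Finset.sum_congr rfl fun T hT => ?_
    have hind : indF T x = 1 := by
      refine Finset.prod_eq_one fun i hi => ?_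
      have hxi : x i = 1 := by
        have := (Finset.mem_powerset.mp hT) hi
        simpa [suppF] using this
      rw [yv, hxi]
      decide
    rw [hind, mul_one]
  have step3 : ∑ T ∈ (suppF x).powerset, m T * indF T x
      = ∑ T : Finset (Fin n), m T * indF T x := by
    refine Finset.sum_subset (Finset.subset_univ _) fun T _ hT => ?_
    obtain ⟨i, hiT, hins⟩ := Finset.not_subset.mp (fun hc => hT (Finset.mem_powerset.mpr hc))
    have hxi : x i = 0 := by
      rcases (by decide : ∀ z : ZMod 2, z = 0 ∨ z = 1) (x i) with h | h
      · exact h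
      · exact absurd (by simpa [suppF] using h) hins
    have : indF T x = 0 := Finset.prod_eq_zero hiT (by simp [yv, hxi])
    rw [this, mul_zero]
  have step4 : ∑ T : Finset (Fin n), m T * indF T x
      = m ∅ * indF ∅ x + (∑ i : Fin n, m {i} * indF {i} x)
        + (∑ p : Pair n, m {p.val.1, p.val.2} * indF {p.val.1, p.val.2} x)
        + (∑ t : Triple n, m {t.val.1, t.val.2.1, t.val.2.2} * indF {t.val.1, t.val.2.1, t.val.2.2} x) :=
    sum_finset_decomp _ (fun T hT => by rw [hm4 T hT, zero_mul])
  have ev0 : m ∅ * indF ∅ x = m ∅ := by simp [indF]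
  have ev1 : ∀ i : Fin n, m {i} * indF {i} x = m {i} * yv x i := by
    intro i; simp [indF]
  have ev2 : ∀ p : Pair n, m {p.val.1, p.val.2} * indF {p.val.1, p.val.2} x
      = m2 m p * (yv x p.val.1 * yv x p.val.2) := by
    intro p
    rw [indF, Finset.prod_pair (ne_of_lt p.prop)]
    rfl
  have ev3 : ∀ t : Triple n, m {t.val.1, t.val.2.1, t.val.2.2} * indF {t.val.1, t.val.2.1, t.val.2.2} x
      = m3 m t * (yv x t.val.1 * yv x t.val.2.1 * yv x t.val.2.2) := by
    intro t
    have h12 : t.val.1 ≠ t.val.2.1 := ne_of_lt t.prop.1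
    have h13 : t.val.1 ≠ t.val.2.2 := ne_of_lt (t.prop.1.trans t.prop.2)
    have h23 : t.val.2.1 ≠ t.val.2.2 := ne_of_lt t.prop.2
    rw [indF, Finset.prod_insert (by simp [h12, h13]), Finset.prod_pair h23]
    show m {t.val.1, t.val.2.1, t.val.2.2} * (yv x t.val.1 * (yv x t.val.2.1 * yv x t.val.2.2))
      = m {t.val.1, t.val.2.1, t.val.2.2} * (yv x t.val.1 * yv x t.val.2.1 * yv x t.val.2.2)
    ring
  rw [step1, step2, step3, step4, ev0, Finset.sum_congr rfl (fun i _ => ev1 i),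
    Finset.sum_congr rfl (fun p _ => ev2 p), Finset.sum_congr rfl (fun t _ => ev3 t)]
  exact (pnf_eq_sum m hm2 hm3 x).symm

section GroupPart

variable {n : ℕ}

lemma main_P (W : LinearMap.GeneralLinearGroup ℂ (QState n)) (hW : W ∈ dihedralGroup' n) :
    ∃ (f : V n → ZMod 8) (g g' L L' : V n → V n),
      Cls f ∧ (∀ x u, g (x + u) = g x + L u) ∧ (∀ x u, g' (x + u) = g' x + L' u)
      ∧ (∀ x, g (g' x) = x) ∧ (∀ x, g' (g x) = x)
      ∧ ∀ x, W.val (e x) = ω ^ (f x).val • e (g x) := by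
  induction hW using Subgroup.closure_induction with
  | mem U hU =>
    rcases hU with ((h | h) | h) | h
    · -- scalar ω
      refine ⟨fun _ => 1, id, id, id, id, Cls.const 1, fun _ _ => rfl, fun _ _ => rfl,
        fun _ => rfl, fun _ => rfl, fun x => ?_⟩
      rw [h x, show ((1:ZMod 8)).val = 1 from rfl, pow_one]
      rfl
    · -- T gate
      obtain ⟨i, h⟩ := h
      refine ⟨fun x => ((x i).val : ZMod 8), id, id, id, id, Cls.coord i, fun _ _ => rfl,
        fun _ _ => rfl, fun _ => rfl, fun _ => rfl, fun x => ?_⟩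
      rw [h x]
      have hv : (((x i).val : ZMod 8)).val = (x i).val :=
        ZMod.val_cast_of_lt (lt_of_lt_of_le (ZMod.val_lt (x i)) (by norm_num))
      rw [hv]
      rfl
    · -- X gate
      obtain ⟨i, h⟩ := h
      have hupdate : ∀ x : V n, Function.update x i (x i + 1) = x + δ i := by
        intro x
        funext j
        by_cases hj : j = i
        · subst hj
          simp [Function.update_apply, δ, χ]
        · simp [Function.update_apply, hj, δ, χ]
      have habb : ∀ a b : ZMod 2, a + b + b = a := by decide
      have hdd : ∀ x : V n, (x + δ i) + δ i = x := by
        intro x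
        funext j
        simp only [Pi.add_apply]
        exact habb (x j) (δ i j)
      refine ⟨fun _ => 0, fun x => x + δ i, fun x => x + δ i, id, id, Cls.const 0,
        fun x u => by dsimp only [id]; abel, fun x u => by dsimp only [id]; abel,
        hdd, hdd, fun x => ?_⟩
      rw [h x, hupdate x, show ((0:ZMod 8)).val = 0 from rfl, pow_zero, one_smul]
    · -- CNOT gate
      obtain ⟨i, j, hij, h⟩ := h
      set g : V n → V n := fun x => x + (x i) • δ j with hgdef
      have habb : ∀ a b : ZMod 2, a + b + b = a := by decide
      have hδji : δ j i = 0 := by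
        simp [δ, χ, Finset.mem_singleton, hij]
      have hδjj : δ j j = 1 := by
        simp [δ, χ]
      have hupdate : ∀ x : V n, Function.update x j (x i + x j) = g x := by
        intro x
        funext k
        by_cases hk : k = j
        · subst hk
          simp only [Function.update_self, hgdef, Pi.add_apply, Pi.smul_apply, smul_eq_mul,
            hδjj, mul_one]
          ring
        · simp only [Function.update_of_ne hk, hgdef, Pi.add_apply, Pi.smul_apply, smul_eq_mul,
            show δ j k = 0 by simp [δ, χ, hk], mul_zero, add_zero]
      have haff : ∀ x u : V n, g (x + u) = g x + g u := by
        intro x u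
        funext k
        simp only [hgdef, Pi.add_apply, Pi.smul_apply, smul_eq_mul]
        ring
      have hginv : ∀ x : V n, g (g x) = x := by
        intro x
        have hgi : (g x) i = x i := by
          simp [hgdef, hδji]
        funext k
        have : g (g x) k = x k + x i * δ j k + x i * δ j k := by
          simp only [hgdef, Pi.add_apply, Pi.smul_apply, smul_eq_mul] at hgi ⊢
          rw [hgi]
        rw [this, add_assoc]
        exact (by decide : ∀ a b : ZMod 2, a + (b + b) = a) (x k) (x i * δ j k)
      refine ⟨fun _ => 0, g, g, g, g, Cls.const 0, haff, haff, hginv, hginv, fun x => ?_⟩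
      rw [h x, hupdate x, show ((0:ZMod 8)).val = 0 from rfl, pow_zero, one_smul]
  | one =>
    refine ⟨fun _ => 0, id, id, id, id, Cls.const 0, fun _ _ => rfl, fun _ _ => rfl,
      fun _ => rfl, fun _ => rfl, fun x => ?_⟩
    rw [show ((0:ZMod 8)).val = 0 from rfl, pow_zero, one_smul]
    simp
  | mul U Uv hU hUv PU PUv =>
    obtain ⟨fU, gU, gU', LU, LU', hClsU, hgU, hgU', hUi1, hUi2, hUval⟩ := PU
    obtain ⟨fV, gV, gV', LV, LV', hClsV, hgV, hgV', hVi1, hVi2, hVval⟩ := PUv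
    refine ⟨fun z => fV z + fU (gV z), fun z => gU (gV z), fun z => gV' (gU' z),
      fun u => LU (LV u), fun u => LV' (LU' u),
      hClsV.add (hClsU.comp gV LV hgV),
      fun x u => by show gU (gV (x + u)) = gU (gV x) + LU (LV u); rw [hgV, hgU],
      fun x u => by show gV' (gU' (x + u)) = gV' (gU' x) + LV' (LU' u); rw [hgU', hgV'],
      fun x => by show gU (gV (gV' (gU' x))) = x; rw [hVi1, hUi1],
      fun x => by show gV' (gU' (gU (gV x))) = x; rw [hUi2, hVi2], fun x => ?_⟩
    rw [Units.val_mul, Module.End.mul_apply, hVval x, map_smul, hUval (gV x), smul_smul,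
      ← ω_val_add]
  | inv U hU PU =>
    obtain ⟨fU, gU, gU', LU, LU', hClsU, hgU, hgU', hUi1, hUi2, hUval⟩ := PU
    have hUU : ∀ v : QState n, (U⁻¹).val (U.val v) = v := by
      intro v
      have h1 : ((U⁻¹ * U : (QState n →ₗ[ℂ] QState n)ˣ) : QState n →ₗ[ℂ] QState n) v = v := by
        rw [inv_mul_cancel]
        simp
      rwa [Units.val_mul, Module.End.mul_apply] at h1
    refine ⟨fun z => -(fU (gU' z)), gU', gU, LU', LU,
      Cls.neg (hClsU.comp gU' LU' hgU'), hgU', hgU, hUi2, hUi1, fun x => ?_⟩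
    have h1 : U.val (e (gU' x)) = ω ^ (fU (gU' x)).val • e x := by
      rw [hUval (gU' x), hUi1 x]
    have h2 : e (gU' x) = ω ^ (fU (gU' x)).val • (U⁻¹).val (e x) := by
      conv_lhs => rw [← hUU (e (gU' x)), h1]
      rw [map_smul]
    rw [h2, smul_smul, ω_val_neg, one_smul]

end GroupPart

end CDihAux

theorem stmt14 {n : ℕ} (W : LinearMap.GeneralLinearGroup ℂ (QState n))
    (hW : W ∈ dihedralGroup' n)
    (hdiag : ∀ x : Fin n → ZMod 2, ∃ l : ℂ, W.val (e x) = l • e x) :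
    ∃ (a₀ : ZMod 8) (a : Fin n → ZMod 8) (b : Pair n → ZMod 4) (c : Triple n → ZMod 2),
      ∀ x : Fin n → ZMod 2, W.val (e x) = ω ^ (pnf a₀ a b c x).val • e x := by
  obtain ⟨f, g, g', L, L', hcls, hg, hg', hgg', hg'g, hval⟩ := main_P W hW
  have hfix : ∀ x, g x = x := by
    intro x
    by_contra hne
    obtain ⟨l, hl⟩ := hdiag x
    have heq := congrFun ((hval x).symm.trans hl) (g x)
    simp only [Pi.smul_apply, smul_eq_mul] at heq
    rw [show e (g x) (g x) = 1 from Pi.single_eq_same (g x) 1,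
      show e x (g x) = 0 from Pi.single_eq_of_ne hne 1] at heq
    simp only [mul_one, mul_zero] at heq
    exact pow_ne_zero _ ω_ne heq
  obtain ⟨a₀, a, b, c, hrep⟩ := repr_of_Cls hcls
  exact ⟨a₀, a, b, c, fun x => by rw [hval x, hfix x, hrep x]⟩
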